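/- arXiv:2002.08322 — 2 statements merged into one kernel-verified Lean document; each statement's English description precedes it below -/
import Mathlib

section
/- Let q be a prime power, m, n, k, r positive integers with r ≤ n and k + 1 < n. Let α be a generator of a basis (1, α, …, α^{m−1}) of F_{q^m} over F_q. Let H be an (n−k−1)×n matrix over F_{q^m}, let S be a nonzero m×r matrix over F_q, and let C be an r×n matrix over F_q. If the row vector (1, α, …, α^{m−1})·S·C·Hᵀ (computed over F_{q^m}, viewing the entries of S and C in F_{q^m} via the inclusion F_q ⊆ F_{q^m}) is the zero vector of length n−k−1, then the r×(n−k−1) matrix C·Hᵀ over F_{q^m} has rank at most r−1; equivalently, every r×r minor of C·Hᵀ vanishes. -/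
/-!
The vector `w = (1, α, …, α^{m−1}) · S` is nonzero: its `j`-th entry is `∑ᵢ S i j • αⁱ`, and the
powers of `α` are linearly independent over `F_q`. The hypothesis says `w · (C · Hᵀ) = 0`, a
nontrivial linear relation among the rows of `C · Hᵀ`, so its rank is less than `r` and every
`r × r` minor is singular.
-/

open Matrix

theorem Matrix.vecMul_map_ne_zero_of_linearIndependent {ι κ K L : Type*} [Fintype ι]
    [CommRing K] [CommRing L] [Algebra K L] {v : ι → L} (hv : LinearIndependent K v)
    {S : Matrix ι κ K} (hS : S ≠ 0) : v ᵥ* S.map (algebraMap K L) ≠ 0 := by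
  intro h
  apply hS
  ext i j
  have hcol : ∑ i, S i j • v i = 0 := by
    simpa [vecMul, dotProduct, Algebra.smul_def, mul_comm] using congrFun h j
  exact Fintype.linearIndependent_iff.mp hv _ hcol i

theorem Matrix.rank_lt_card_height_of_vecMul_eq_zero {m n R : Type*} [Fintype m] [Fintype n]
    [Field R]
    {M : Matrix m n R} {w : m → R} (hw : w ≠ 0) (hwM : w ᵥ* M = 0) :
    M.rank < Fintype.card m := by
  have hdep : ¬ LinearIndependent R M.row := fun h =>
    hw (funext (Fintype.linearIndependent_iff.mp h w (by rwa [vecMul_eq_sum] at hwM)))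
  rw [linearIndependent_iff_card_le_finrank_span, not_le] at hdep
  rwa [rank_eq_finrank_span_row]

theorem Matrix.det_submatrix_eq_zero_of_vecMul_eq_zero {m n R : Type*} [Fintype m]
    [DecidableEq m] [CommRing R] [IsDomain R] {M : Matrix m n R} {w : m → R} (hw : w ≠ 0)
    (hwM : w ᵥ* M = 0) (f : m → n) : (M.submatrix id f).det = 0 :=
  exists_vecMul_eq_zero_iff.mp ⟨w, hw, funext fun j => by
    simpa [vecMul, dotProduct] using congrFun hwM (f j)⟩

theorem stmt_0_general (m n k r : ℕ)
    (Fq L : Type) [Field Fq] [Field L] [Algebra Fq L]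
    (α : L) (b : Module.Basis (Fin m) Fq L) (hb : ∀ i : Fin m, b i = α ^ (i : ℕ))
    (H : Matrix (Fin (n - k - 1)) (Fin n) L)
    (S : Matrix (Fin m) (Fin r) Fq) (hS : S ≠ 0)
    (C : Matrix (Fin r) (Fin n) Fq)
    (hzero : Matrix.vecMul (fun i : Fin m => α ^ (i : ℕ))
      (S.map (algebraMap Fq L) * C.map (algebraMap Fq L) * H.transpose) = 0) :
    (C.map (algebraMap Fq L) * H.transpose).rank ≤ r - 1 ∧
      ∀ (T : Finset (Fin (n - k - 1))) (hT : T.card = r),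
        ((C.map (algebraMap Fq L) * H.transpose).submatrix id
          (T.orderEmbOfFin hT)).det = 0 := by
  have hpow : LinearIndependent Fq (fun i : Fin m => α ^ (i : ℕ)) := by
    simpa only [← funext hb] using b.linearIndependent
  set w := (fun i : Fin m => α ^ (i : ℕ)) ᵥ* S.map (algebraMap Fq L)
  have hw : w ≠ 0 := vecMul_map_ne_zero_of_linearIndependent hpow hS
  have hwM : w ᵥ* (C.map (algebraMap Fq L) * H.transpose) = 0 := by
    rwa [vecMul_vecMul, ← Matrix.mul_assoc]
  refine ⟨?_, fun T hT => det_submatrix_eq_zero_of_vecMul_eq_zero hw hwM _⟩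
  have := rank_lt_card_height_of_vecMul_eq_zero hw hwM
  rw [Fintype.card_fin] at this
  omega

/-- If the row vector `(1, α, …, α^{m−1}) · S · C · Hᵀ` vanishes
(for a nonzero `S`), then the `r × (n−k−1)` matrix `C · Hᵀ` over `F_{q^m}` has
rank at most `r − 1`; equivalently, every `r × r` minor of `C · Hᵀ` vanishes. -/
theorem stmt_0 (q m n k r : ℕ) (hq : IsPrimePow q)
    (hm : 0 < m) (hn : 0 < n) (hk : 0 < k) (hr : 0 < r)
    (hrn : r ≤ n) (hkn : k + 1 < n)
    (Fq L : Type) [Field Fq] [Fintype Fq] [Field L] [Fintype L] [Algebra Fq L]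
    (hcardFq : Fintype.card Fq = q) (hcardL : Fintype.card L = q ^ m)
    (α : L) (b : Module.Basis (Fin m) Fq L) (hb : ∀ i : Fin m, b i = α ^ (i : ℕ))
    (H : Matrix (Fin (n - k - 1)) (Fin n) L)
    (S : Matrix (Fin m) (Fin r) Fq) (hS : S ≠ 0)
    (C : Matrix (Fin r) (Fin n) Fq)
    (hzero : Matrix.vecMul (fun i : Fin m => α ^ (i : ℕ))
      (S.map (algebraMap Fq L) * C.map (algebraMap Fq L) * H.transpose) = 0) :
    (C.map (algebraMap Fq L) * H.transpose).rank ≤ r - 1 ∧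
      ∀ (T : Finset (Fin (n - k - 1))) (hT : T.card = r),
        ((C.map (algebraMap Fq L) * H.transpose).submatrix id
          (T.orderEmbOfFin hT)).det = 0 :=
  stmt_0_general m n k r Fq L α b hb H S hS C hzero
end

section
/- Let q be a prime power, m, n, k, r positive integers with r ≤ n and k + 1 < n, and let (1, α, …, α^{m−1}) be a basis of F_{q^m} over F_q. Let H be an (n−k−1)×n matrix over F_{q^m}. Assume that every nonzero vector v ∈ F_{q^m}^n with v·Hᵀ = 0 has rank weight at least r. Then for every r×(n−r) matrix C* over F_q, the following are equivalent: (i) the r×(n−k−1) matrix (I_r | C*)·Hᵀ over F_{q^m} has rank strictly less than r; (ii) there exists an m×(r−1) matrix S* over F_q such that (1, α, …, α^{m−1}) · (e₁ | S*) · (I_r | C*) · Hᵀ = 0, where e₁ ∈ F_q^m is the column vector (1, 0, …, 0)ᵀ and (e₁ | S*) is the m×r matrix with first column e₁ and remaining columns S*. -/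
/-- The `r × n` matrix `(I_r | C)` obtained by concatenating the identity
matrix `I_r` with an `r × (n−r)` matrix `C`. -/
def augId (r n : ℕ) {R : Type*} [Zero R] [One R]
    (C : Matrix (Fin r) (Fin (n - r)) R) : Matrix (Fin r) (Fin n) R :=
  Matrix.of fun i j =>
    if h : (j : ℕ) < r then (if (i : ℕ) = (j : ℕ) then 1 else 0)
    else C i ⟨(j : ℕ) - r, by have := j.isLt; omega⟩

/-- The `m × r` matrix `(e₁ | S)` whose first column is `e₁ = (1,0,…,0)ᵀ` and
whose remaining columns are those of the `m × (r−1)` matrix `S`. -/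
def augE1 (m r : ℕ) {R : Type*} [Zero R] [One R]
    (S : Matrix (Fin m) (Fin (r - 1)) R) : Matrix (Fin m) (Fin r) R :=
  Matrix.of fun i j =>
    if h : (j : ℕ) = 0 then (if (i : ℕ) = 0 then 1 else 0)
    else S i ⟨(j : ℕ) - 1, by have := j.isLt; omega⟩

/-!
`(I_r | C*)·Hᵀ` has rank `< r` iff some nonzero `w ∈ F_{q^m}^r` satisfies `w·(I_r | C*)·Hᵀ = 0`.
Then `v = w·(I_r | C*)` is a nonzero codeword (its first `r` entries are those of `w`) whose
entries are `F_q`-combinations of the entries of `w`, so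
`r ≤ rank weight of v ≤ dim_{F_q} span(w) ≤ r`: the entries of `w` are `F_q`-linearly
independent, and in particular `w₁ ≠ 0`. Scaling `w` to `w₁ = 1` and expanding `w₂, …, w_r` in
the basis `(1, α, …, α^{m-1})` produces `S*`; conversely `(1, α, …, α^{m-1})·(e₁ | S*)` has first
entry `1`.
-/

open Matrix Module

theorem Matrix.rank_lt_card_height_iff_exists_vecMul_eq_zero {K ι κ : Type*} [Field K]
    [Fintype ι] [Fintype κ] (M : Matrix ι κ K) :
    M.rank < Fintype.card ι ↔ ∃ w ≠ 0, w ᵥ* M = 0 := by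
  rw [M.rank_eq_finrank_span_row, ← Set.finrank, (finrank_range_le_card M.row).lt_iff_ne, ne_comm,
    Ne, ← linearIndependent_iff_card_eq_finrank_span, Fintype.not_linearIndependent_iff]
  simp only [vecMul_eq_sum, Function.ne_iff, row]
  exact exists_congr fun w => and_comm

theorem Module.Basis.rank_toMatrix {K V ι κ : Type*} [Field K] [AddCommGroup V]
    [Module K V] [Fintype ι] [Fintype κ] (b : Basis ι K V) (v : κ → V) :
    (b.toMatrix v).rank = (Set.range v).finrank K := by
  have hcols : Set.range (b.toMatrix v).col = b.equivFun '' Set.range v := by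
    rw [← Set.range_comp]; rfl
  rw [rank_eq_finrank_span_cols, hcols, ← LinearEquiv.coe_coe, ← Submodule.map_span,
    LinearEquiv.finrank_map_eq]
  rfl

theorem augId_map (r n : ℕ) {R S : Type*} [NonAssocSemiring R] [NonAssocSemiring S] (f : R →+* S)
    (C : Matrix (Fin r) (Fin (n - r)) R) :
    (augId r n C).map f = augId r n (C.map f) := by
  ext i j
  simp only [augId, map_apply, of_apply]
  split_ifs <;> simp

theorem vecMul_augId_castLE {r n : ℕ} {R : Type*} [NonAssocSemiring R] (hrn : r ≤ n)
    (C : Matrix (Fin r) (Fin (n - r)) R) (w : Fin r → R) (i : Fin r) :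
    (w ᵥ* augId r n C) (Fin.castLE hrn i) = w i := by
  simp [vecMul, dotProduct, augId, Fin.val_inj]

theorem vecMul_map_algebraMap_apply {K L ι κ : Type*} [CommSemiring K] [Semiring L]
    [Algebra K L] [Fintype ι] (w : ι → L) (A : Matrix ι κ K) (j : κ) :
    (w ᵥ* A.map (algebraMap K L)) j = ∑ i, A i j • w i := by
  simp only [vecMul, dotProduct, map_apply, Algebra.smul_def, Algebra.commutes]

theorem linearIndependent_of_card_le_finrank_range_vecMul_map {K L ι κ : Type*} [Field K]
    [Field L] [Algebra K L] [Fintype ι] (w : ι → L) (A : Matrix ι κ K)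
    (h : Fintype.card ι ≤ (Set.range (w ᵥ* A.map (algebraMap K L))).finrank K) :
    LinearIndependent K w := by
  have := FiniteDimensional.span_of_finite K (Set.finite_range w)
  refine linearIndependent_iff_card_eq_finrank_span.mpr (le_antisymm ?_ (finrank_range_le_card w))
  refine h.trans (Submodule.finrank_mono (Submodule.span_le.mpr ?_))
  rintro _ ⟨j, rfl⟩
  rw [SetLike.mem_coe, vecMul_map_algebraMap_apply]
  exact Submodule.sum_mem _ fun i _ => Submodule.smul_mem _ _ (Submodule.subset_span ⟨i, rfl⟩)

theorem vecMul_augE1_map_apply_zero {K L : Type*} [CommSemiring K] [Semiring L] [Algebra K L]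
    {m r : ℕ} (b : Basis (Fin m) K L) (hm : 0 < m) (hr : 0 < r)
    (S : Matrix (Fin m) (Fin (r - 1)) K) :
    (⇑b ᵥ* (augE1 m r S).map (algebraMap K L)) ⟨0, hr⟩ = b ⟨0, hm⟩ := by
  rw [vecMul_map_algebraMap_apply, Fintype.sum_eq_single ⟨0, hm⟩] <;>
    simp_all [augE1, Fin.ext_iff]

theorem exists_vecMul_augE1_eq_iff {K L : Type*} [CommSemiring K] [Semiring L] [Algebra K L]
    {m r : ℕ} (b : Basis (Fin m) K L) (hm : 0 < m) (hr : 0 < r) (w : Fin r → L) :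
    (∃ S, ⇑b ᵥ* (augE1 m r S).map (algebraMap K L) = w) ↔ w ⟨0, hr⟩ = b ⟨0, hm⟩ := by
  refine ⟨fun ⟨S, hS⟩ => hS ▸ vecMul_augE1_map_apply_zero b hm hr S, fun hw => ?_⟩
  refine ⟨Matrix.of fun i j => b.repr (w ⟨j + 1, Nat.add_lt_of_lt_sub j.isLt⟩) i,
    funext fun j => ?_⟩
  by_cases hj : (j : ℕ) = 0
  · obtain rfl : j = ⟨0, hr⟩ := Fin.ext hj
    rw [vecMul_augE1_map_apply_zero, hw]
  · simp only [vecMul_map_algebraMap_apply, augE1, of_apply, dif_neg hj,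
      Nat.sub_add_cancel (Nat.pos_of_ne_zero hj), Fin.eta, Basis.sum_repr]

theorem linearIndependent_of_vecMul_augId_mul_eq_zero {K L ι : Type*} [Field K] [Field L]
    [Algebra K L] [Fintype ι] {r n : ℕ} (hrn : r ≤ n) (C : Matrix (Fin r) (Fin (n - r)) K)
    (G : Matrix (Fin n) ι L)
    (hmin : ∀ v : Fin n → L, v ≠ 0 → v ᵥ* G = 0 → r ≤ (Set.range v).finrank K)
    {w : Fin r → L} (hw0 : w ≠ 0) (hw : w ᵥ* ((augId r n C).map (algebraMap K L) * G) = 0) :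
    LinearIndependent K w := by
  set v := w ᵥ* (augId r n C).map (algebraMap K L)
  have hv0 : v ≠ 0 := by
    obtain ⟨i, hi⟩ := Function.ne_iff.mp hw0
    refine Function.ne_iff.mpr ⟨Fin.castLE hrn i, ?_⟩
    simpa [v, augId_map, vecMul_augId_castLE] using hi
  have hvG : v ᵥ* G = 0 := by rw [vecMul_vecMul, hw]
  refine linearIndependent_of_card_le_finrank_range_vecMul_map w (augId r n C) ?_
  rw [Fintype.card_fin]
  exact hmin v hv0 hvG

theorem stmt_2_general (m n k r : ℕ) (hm : 0 < m) (hr : 0 < r) (hrn : r ≤ n)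
    (Fq L : Type) [Field Fq] [Field L] [Algebra Fq L]
    (α : L) (b : Module.Basis (Fin m) Fq L) (hb : ∀ i : Fin m, b i = α ^ (i : ℕ))
    (H : Matrix (Fin (n - k - 1)) (Fin n) L)
    (hmin : ∀ v : Fin n → L, v ≠ 0 → Matrix.vecMul v H.transpose = 0 →
      r ≤ (Matrix.of (fun (i : Fin m) (j : Fin n) => b.repr (v j) i) :
        Matrix (Fin m) (Fin n) Fq).rank)
    (Cstar : Matrix (Fin r) (Fin (n - r)) Fq) :
    ((augId r n Cstar).map (algebraMap Fq L) * H.transpose).rank < r ↔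
      ∃ Sstar : Matrix (Fin m) (Fin (r - 1)) Fq,
        Matrix.vecMul (fun i : Fin m => α ^ (i : ℕ))
          ((augE1 m r Sstar).map (algebraMap Fq L) *
            (augId r n Cstar).map (algebraMap Fq L) * H.transpose) = 0 := by
  have hα : (fun i : Fin m => α ^ (i : ℕ)) = ⇑b := funext fun i => (hb i).symm
  have hb0 : b ⟨0, hm⟩ = 1 := by rw [hb]; exact pow_zero α
  have hweight : ∀ v : Fin n → L, v ≠ 0 → v ᵥ* H.transpose = 0 →
      r ≤ (Set.range v).finrank Fq := fun v hv hvH =>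
    (hmin v hv hvH).trans_eq (b.rank_toMatrix v)
  simp_rw [hα, Matrix.mul_assoc]
  set M := (augId r n Cstar).map (algebraMap Fq L) * H.transpose
  have hrank := M.rank_lt_card_height_iff_exists_vecMul_eq_zero
  rw [Fintype.card_fin] at hrank
  simp_rw [hrank, ← vecMul_vecMul]
  constructor
  · rintro ⟨w, hw0, hwM⟩
    have hw₀ : w ⟨0, hr⟩ ≠ 0 :=
      (linearIndependent_of_vecMul_augId_mul_eq_zero hrn Cstar _ hweight hw0 hwM).ne_zero _
    obtain ⟨S, hS⟩ := (exists_vecMul_augE1_eq_iff b hm hr ((w ⟨0, hr⟩)⁻¹ • w)).mpr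
      (by rw [hb0, Pi.smul_apply, smul_eq_mul, inv_mul_cancel₀ hw₀])
    exact ⟨S, by rw [hS, smul_vecMul, hwM, smul_zero]⟩
  · rintro ⟨S, hS⟩
    refine ⟨_, Function.ne_iff.mpr ⟨⟨0, hr⟩, ?_⟩, hS⟩
    rw [vecMul_augE1_map_apply_zero b hm hr S, hb0]
    exact one_ne_zero

/-- If every nonzero `v ∈ F_{q^m}^n` with `v · Hᵀ = 0` has rank
weight at least `r`, then for every `r × (n−r)` matrix `C*` over `F_q`:
`(I_r | C*) · Hᵀ` has rank `< r` iff there is an `m × (r−1)` matrix `S*` over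
`F_q` with `(1, α, …, α^{m−1}) · (e₁ | S*) · (I_r | C*) · Hᵀ = 0`. -/
theorem stmt_2 (q m n k r : ℕ) (hq : IsPrimePow q)
    (hm : 0 < m) (hn : 0 < n) (hk : 0 < k) (hr : 0 < r)
    (hrn : r ≤ n) (hkn : k + 1 < n)
    (Fq L : Type) [Field Fq] [Fintype Fq] [Field L] [Fintype L] [Algebra Fq L]
    (hcardFq : Fintype.card Fq = q) (hcardL : Fintype.card L = q ^ m)
    (α : L) (b : Module.Basis (Fin m) Fq L) (hb : ∀ i : Fin m, b i = α ^ (i : ℕ))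
    (H : Matrix (Fin (n - k - 1)) (Fin n) L)
    (hmin : ∀ v : Fin n → L, v ≠ 0 → Matrix.vecMul v H.transpose = 0 →
      r ≤ (Matrix.of (fun (i : Fin m) (j : Fin n) => b.repr (v j) i) :
        Matrix (Fin m) (Fin n) Fq).rank)
    (Cstar : Matrix (Fin r) (Fin (n - r)) Fq) :
    ((augId r n Cstar).map (algebraMap Fq L) * H.transpose).rank < r ↔
      ∃ Sstar : Matrix (Fin m) (Fin (r - 1)) Fq,
        Matrix.vecMul (fun i : Fin m => α ^ (i : ℕ))
          ((augE1 m r Sstar).map (algebraMap Fq L) *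
            (augId r n Cstar).map (algebraMap Fq L) * H.transpose) = 0 :=
  stmt_2_general m n k r hm hr hrn Fq L α b hb H hmin Cstar
end
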